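/- arXiv:1404.1473 — 2 statements merged into one kernel-verified Lean document; each statement's English description precedes it below -/
import Mathlib

section
/- Under the errors-in-variables model with U_1,…,U_K, ε mutually independent and (U_1,…,U_K,ε) independent of X*, assume all of X*_1,…,X*_K, U_1,…,U_K, ε are square-integrable. Let s = (s_1,…,s_K,s_y) ∈ ℝ^{K+1} be a point at which φ_{(X,Y)}(s) ≠ 0. Then for all indices k_1 ≠ k_2 with 1 ≤ k_1,k_2 ≤ K, the second-order logarithmic derivative of the characteristic function of (X,Y) in the directions s_{k_1}, s_{k_2} satisfies Λ_{k_1,k_2}[φ_{(X,Y)}](s) = Λ_{k_1,k_2}[φ_{X*}](s_1 + β_1 s_y, …, s_K + β_K s_y). -/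
open MeasureTheory ProbabilityTheory

/-- Characteristic function of a random vector `Z : Ω → (Fin d → ℝ)`. -/
noncomputable def charF {Ω : Type*} [MeasurableSpace Ω] (μ : Measure Ω) {d : ℕ}
    (Z : Ω → Fin d → ℝ) (s : Fin d → ℝ) : ℂ :=
  ∫ ω, Complex.exp (Complex.I * ((∑ k, s k * Z ω k : ℝ) : ℂ)) ∂μ

/-- Partial derivative of `φ : ℝ^d → ℂ` in the `j`-th coordinate direction. -/
noncomputable def pd {d : ℕ} (j : Fin d) (φ : (Fin d → ℝ) → ℂ) (s : Fin d → ℝ) : ℂ :=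
  fderiv ℝ φ s (Pi.single j 1)

/-- Second-order logarithmic derivative
`Λ_{j,k}[φ](s) = ∂_j∂_kφ(s)/φ(s) − (∂_jφ(s))(∂_kφ(s))/φ(s)²`. -/
noncomputable def Lam {d : ℕ} (j k : Fin d) (φ : (Fin d → ℝ) → ℂ) (s : Fin d → ℝ) : ℂ :=
  pd j (pd k φ) s / φ s - (pd j φ s) * (pd k φ s) / (φ s) ^ 2

/-!
The observation is `(X, Y) = A X* + (U, ε)` with `A x = (x, ⟨β, x⟩)`, so independence factors
`φ_{(X,Y)}(s) = φ_{X*}(Aᵀ s) · φ_{(U,ε)}(s)`. The operator `Λ` turns products into sums and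
commutes with the substitution `s ↦ Aᵀ s`, which sends `e_k` to `e_k` for `k ≤ K`. The remaining
term vanishes: as the coordinates of `(U, ε)` are independent, `φ_{(U,ε)}` is the product of a
function of `s_{k₁}` alone and a function not depending on `s_{k₁}`, and each of these has
vanishing mixed derivative `Λ_{k₁,k₂}`.
-/

section Derivatives

variable {d : ℕ}

lemma pd_add (j : Fin d) {f g : (Fin d → ℝ) → ℂ} {x : Fin d → ℝ}
    (hf : DifferentiableAt ℝ f x) (hg : DifferentiableAt ℝ g x) :
    pd j (fun y => f y + g y) x = pd j f x + pd j g x := by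
  simp only [pd, fderiv_fun_add hf hg, add_apply]

lemma pd_mul (j : Fin d) {f g : (Fin d → ℝ) → ℂ} {x : Fin d → ℝ}
    (hf : DifferentiableAt ℝ f x) (hg : DifferentiableAt ℝ g x) :
    pd j (fun y => f y * g y) x = pd j f x * g x + f x * pd j g x := by
  simp only [pd, fderiv_fun_mul hf hg, add_apply, smul_apply, smul_eq_mul]
  ring

lemma ContDiff.pd {φ : (Fin d → ℝ) → ℂ} (hφ : ContDiff ℝ 2 φ) (k : Fin d) :
    ContDiff ℝ 1 (pd k φ) :=
  (ContinuousLinearMap.apply ℝ ℂ (Pi.single k 1 : Fin d → ℝ)).contDiff.comp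
    (hφ.fderiv_right (m := 1) (by norm_num))

lemma pd_eq_zero_of_invariant {f : (Fin d → ℝ) → ℂ} {j : Fin d}
    (hf : ∀ x (t : ℝ), f (x + t • Pi.single j 1) = f x) : pd j f = 0 := by
  ext x
  by_cases hdiff : DifferentiableAt ℝ f x
  · rw [pd, ← hdiff.lineDeriv_eq_fderiv, lineDeriv]
    simp [hf]
  · simp [pd, fderiv_zero_of_not_differentiableAt hdiff]

lemma pd_invariant_of_invariant {f : (Fin d → ℝ) → ℂ} {j : Fin d}
    (hf : ∀ x (t : ℝ), f (x + t • Pi.single j 1) = f x) (k : Fin d) (x : Fin d → ℝ) (t : ℝ) :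
    pd k f (x + t • Pi.single j 1) = pd k f x := by
  rw [pd, pd, ← fderiv_comp_add_right]
  simp only [hf]

lemma Lam_eq_zero_of_invariant_left {f : (Fin d → ℝ) → ℂ} {j : Fin d}
    (hf : ∀ x (t : ℝ), f (x + t • Pi.single j 1) = f x) (k : Fin d) (s : Fin d → ℝ) :
    Lam j k f s = 0 := by
  simp [Lam, pd_eq_zero_of_invariant hf,
    pd_eq_zero_of_invariant (pd_invariant_of_invariant hf k)]

lemma Lam_eq_zero_of_invariant_right {f : (Fin d → ℝ) → ℂ} {k : Fin d}
    (hf : ∀ x (t : ℝ), f (x + t • Pi.single k 1) = f x) (j : Fin d) (s : Fin d → ℝ) :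
    Lam j k f s = 0 := by
  rw [Lam, pd_eq_zero_of_invariant hf]
  simp [pd]

lemma Lam_mul (j k : Fin d) {f g : (Fin d → ℝ) → ℂ} (hf : ContDiff ℝ 2 f) (hg : ContDiff ℝ 2 g)
    {s : Fin d → ℝ} (hfs : f s ≠ 0) (hgs : g s ≠ 0) :
    Lam j k (fun x => f x * g x) s = Lam j k f s + Lam j k g s := by
  have hf1 : Differentiable ℝ f := hf.differentiable (by norm_num)
  have hg1 : Differentiable ℝ g := hg.differentiable (by norm_num)
  have hfk : Differentiable ℝ (pd k f) := (hf.pd k).differentiable (by norm_num)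
  have hgk : Differentiable ℝ (pd k g) := (hg.pd k).differentiable (by norm_num)
  have hk : pd k (fun x => f x * g x) = fun x => pd k f x * g x + f x * pd k g x :=
    funext fun x => pd_mul k (hf1 x) (hg1 x)
  have hjk : pd j (pd k fun x => f x * g x) s
      = pd j (pd k f) s * g s + pd k f s * pd j g s
        + (pd j f s * pd k g s + f s * pd j (pd k g) s) := by
    rw [hk, pd_add j (f := fun x => pd k f x * g x) (g := fun x => f x * pd k g x)
        ((hfk s).mul (hg1 s)) ((hf1 s).mul (hgk s)),
      pd_mul j (hfk s) (hg1 s), pd_mul j (hf1 s) (hgk s)]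
  rw [Lam, Lam, Lam, hjk, pd_mul j (hf1 s) (hg1 s), pd_mul k (hf1 s) (hg1 s)]
  field_simp
  ring

lemma pd_comp_clm {m : ℕ} {F : (Fin m → ℝ) → ℂ} (hF : Differentiable ℝ F)
    (T : (Fin d → ℝ) →L[ℝ] (Fin m → ℝ)) {j : Fin d} {k : Fin m}
    (hT : T (Pi.single j 1) = Pi.single k 1) :
    pd j (fun x => F (T x)) = fun x => pd k F (T x) := by
  ext x
  rw [pd, pd, ← hT, show (fun x => F (T x)) = F ∘ T from rfl,
    fderiv_comp x (hF (T x)) T.differentiableAt, T.fderiv]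
  rfl

lemma Lam_comp_clm {m : ℕ} {F : (Fin m → ℝ) → ℂ} (hF : ContDiff ℝ 2 F)
    (T : (Fin d → ℝ) →L[ℝ] (Fin m → ℝ)) {j₁ j₂ : Fin d} {k₁ k₂ : Fin m}
    (hT₁ : T (Pi.single j₁ 1) = Pi.single k₁ 1) (hT₂ : T (Pi.single j₂ 1) = Pi.single k₂ 1)
    (s : Fin d → ℝ) :
    Lam j₁ j₂ (fun x => F (T x)) s = Lam k₁ k₂ F (T s) := by
  have hF1 : Differentiable ℝ F := hF.differentiable (by norm_num)
  have hF2 : Differentiable ℝ (pd k₂ F) := (hF.pd k₂).differentiable (by norm_num)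
  simp only [Lam, pd_comp_clm hF1 T hT₁, pd_comp_clm hF1 T hT₂, pd_comp_clm hF2 T hT₁]

open Matrix in
lemma Lam_comp_vecMul {m : ℕ} {F : (Fin m → ℝ) → ℂ} (hF : ContDiff ℝ 2 F)
    (M : Matrix (Fin d) (Fin m) ℝ) {j₁ j₂ : Fin d} {k₁ k₂ : Fin m}
    (hM₁ : Pi.single j₁ 1 ᵥ* M = Pi.single k₁ 1) (hM₂ : Pi.single j₂ 1 ᵥ* M = Pi.single k₂ 1)
    (s : Fin d → ℝ) :
    Lam j₁ j₂ (fun x => F (x ᵥ* M)) s = Lam k₁ k₂ F (s ᵥ* M) :=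
  Lam_comp_clm hF (vecMulLinear M).toContinuousLinearMap hM₁ hM₂ s

end Derivatives

lemma Pi.single_add_update_zero {ι M : Type*} [DecidableEq ι] [AddZeroClass M] (v : ι → M)
    (i : ι) : Pi.single i (v i) + Function.update v i 0 = v := by
  ext j
  by_cases hj : j = i <;> simp [hj]

lemma ProbabilityTheory.iIndepFun.indepFun_single_update {Ω ι β : Type*} [MeasurableSpace Ω]
    {μ : Measure Ω} [Fintype ι] [DecidableEq ι] [MeasurableSpace β] [Zero β]
    {V : ι → Ω → β} (hV : iIndepFun V μ) (hVm : ∀ i, Measurable (V i)) (i : ι) :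
    IndepFun (fun ω => (Pi.single i (V i ω) : ι → β))
      (fun ω => Function.update (fun j => V j ω) i 0) μ := by
  have h := (hV.indepFun_finset {i} {i}ᶜ (by simp) hVm).comp
    (φ := fun y : ({i} : Finset ι) → β => (Pi.single i (y ⟨i, by simp⟩) : ι → β))
    (ψ := fun y : ({i}ᶜ : Finset ι) → β => fun j =>
      if h : j ∈ ({i}ᶜ : Finset ι) then y ⟨j, h⟩ else 0)
    ((measurable_update (0 : ι → β)).comp (measurable_pi_apply _))
    (measurable_pi_lambda _ fun j => by
      by_cases h : j ∈ ({i}ᶜ : Finset ι)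
      · simpa only [h, dif_pos] using measurable_pi_apply _
      · simpa only [h, dif_neg, not_false_eq_true] using measurable_const)
  convert h using 1 <;> ext ω j <;> by_cases hj : j = i <;> simp [hj]

section CharF

open Matrix

variable {Ω : Type*} [MeasurableSpace Ω] {μ : Measure Ω} {d : ℕ}

lemma charF_eq_charFun {Z : Ω → Fin d → ℝ} (hZ : AEMeasurable Z μ) (s : Fin d → ℝ) :
    charF μ Z s = charFun (μ.map fun ω => WithLp.toLp 2 (Z ω)) (WithLp.toLp 2 s) := by
  rw [charFun_apply, integral_map (by fun_prop) (by fun_prop), charF]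
  congr 1 with ω
  simp [PiLp.inner_apply, mul_comm]

lemma contDiff_charF [IsFiniteMeasure μ] {Z : Ω → Fin d → ℝ} (hZ : Measurable Z)
    (hL2 : ∀ k, MemLp (fun ω => Z ω k) 2 μ) : ContDiff ℝ 2 (charF μ Z) := by
  have hmom : MemLp id 2 (μ.map fun ω => WithLp.toLp 2 (Z ω)) :=
    (memLp_map_measure_iff aestronglyMeasurable_id (by fun_prop)).2 (MemLp.of_eval_piLp hL2)
  have h := (contDiff_charFun hmom).comp (EuclideanSpace.equiv (Fin d) ℝ).symm.contDiff
  exact (funext (charF_eq_charFun hZ.aemeasurable)).symm ▸ h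

lemma charF_add_of_indepFun {A B : Ω → Fin d → ℝ} (hA : Measurable A) (hB : Measurable B)
    (hAB : IndepFun A B μ) (s : Fin d → ℝ) :
    charF μ (fun ω => A ω + B ω) s = charF μ A s * charF μ B s := by
  have hchar : Continuous fun z : Fin d → ℝ =>
      Complex.exp (Complex.I * ((∑ k, s k * z k : ℝ) : ℂ)) := by fun_prop
  rw [charF, charF, charF, ← hAB.integral_fun_comp_mul_comp hA.aemeasurable hB.aemeasurable
    hchar.aestronglyMeasurable hchar.aestronglyMeasurable]
  congr 1 with ω
  simp only [Pi.add_apply, mul_add, Finset.sum_add_distrib, Complex.ofReal_add, Complex.exp_add]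

lemma charF_mulVec {m : ℕ} (M : Matrix (Fin d) (Fin m) ℝ) (Z : Ω → Fin m → ℝ) (s : Fin d → ℝ) :
    charF μ (fun ω => M *ᵥ Z ω) s = charF μ Z (s ᵥ* M) := by
  have hdot : ∀ {n : ℕ} (v w : Fin n → ℝ), ∑ k, v k * w k = v ⬝ᵥ w := fun _ _ => rfl
  simp only [charF, hdot, dotProduct_mulVec]

lemma charF_add_smul_single {Z : Ω → Fin d → ℝ} {j : Fin d} (hZ : ∀ ω, Z ω j = 0)
    (s : Fin d → ℝ) (t : ℝ) : charF μ Z (s + t • Pi.single j 1) = charF μ Z s := by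
  simp [charF, add_mul, Finset.sum_add_distrib, Pi.single_apply, hZ]

lemma Lam_charF_eq_zero_of_iIndepFun [IsFiniteMeasure μ] {V : Fin d → Ω → ℝ}
    (hV : iIndepFun V μ) (hVm : ∀ i, Measurable (V i)) (hL2 : ∀ i, MemLp (V i) 2 μ)
    {j k : Fin d} (hjk : j ≠ k) {s : Fin d → ℝ} (hs : charF μ (fun ω i => V i ω) s ≠ 0) :
    Lam j k (charF μ fun ω i => V i ω) s = 0 := by
  set W₁ : Ω → Fin d → ℝ := fun ω => Pi.single j (V j ω)
  set W₂ : Ω → Fin d → ℝ := fun ω => Function.update (fun i => V i ω) j 0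
  have hW₁m : Measurable W₁ := (measurable_update (0 : Fin d → ℝ)).comp (hVm j)
  have hW₂m : Measurable W₂ := by fun_prop
  have hsplit : charF μ (fun ω i => V i ω) = fun x => charF μ W₁ x * charF μ W₂ x := by
    ext x
    rw [← charF_add_of_indepFun hW₁m hW₂m (hV.indepFun_single_update hVm j)]
    congr 1 with ω : 1
    exact (Pi.single_add_update_zero (fun i => V i ω) j).symm
  have hC₁ : ContDiff ℝ 2 (charF μ W₁) := contDiff_charF hW₁m fun i => by
    by_cases h : i = j <;> simp [W₁, h, hL2]
  have hC₂ : ContDiff ℝ 2 (charF μ W₂) := contDiff_charF hW₂m fun i => by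
    by_cases h : i = j <;> simp [W₂, h, hL2]
  rw [hsplit] at hs ⊢
  rw [Lam_mul j k hC₁ hC₂ (left_ne_zero_of_mul hs) (right_ne_zero_of_mul hs),
    Lam_eq_zero_of_invariant_right
      (charF_add_smul_single fun ω => Pi.single_eq_of_ne hjk.symm _),
    Lam_eq_zero_of_invariant_left (charF_add_smul_single fun ω => Function.update_self _ _ _),
    add_zero]

end CharF

section Model

open Matrix

variable {K : ℕ}

def obsMatrix (β : Fin K → ℝ) : Matrix (Fin (K + 1)) (Fin K) ℝ :=
  Matrix.of (Fin.snoc (α := fun _ => Fin K → ℝ) (fun k => Pi.single k 1) β)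

lemma obsMatrix_mulVec (β x : Fin K → ℝ) :
    obsMatrix β *ᵥ x = Fin.snoc x (∑ k, β k * x k) := by
  ext i
  induction i using Fin.lastCases with
  | last => simp [obsMatrix, mulVec, dotProduct]
  | cast k => simp [obsMatrix, mulVec]

lemma vecMul_obsMatrix (β : Fin K → ℝ) (s : Fin (K + 1) → ℝ) :
    s ᵥ* obsMatrix β = fun k => s (Fin.castSucc k) + β k * s (Fin.last K) := by
  ext k
  simp [obsMatrix, vecMul, dotProduct, Fin.sum_univ_castSucc, Pi.single_apply, mul_comm]

lemma single_castSucc_vecMul_obsMatrix (β : Fin K → ℝ) (k : Fin K) :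
    Pi.single (Fin.castSucc k) 1 ᵥ* obsMatrix β = Pi.single k 1 := by
  ext i
  simp [obsMatrix]

lemma charF_observation {Ω : Type*} [MeasurableSpace Ω] {μ : Measure Ω}
    {Xstar : Ω → Fin K → ℝ} {U : Fin K → Ω → ℝ} {eps : Ω → ℝ} {β : Fin K → ℝ}
    {X : Fin K → Ω → ℝ} {Y : Ω → ℝ}
    (hXm : Measurable Xstar) (hUm : ∀ k, Measurable (U k)) (hem : Measurable eps)
    (hX : ∀ k ω, X k ω = Xstar ω k + U k ω) (hY : ∀ ω, Y ω = ∑ k, β k * Xstar ω k + eps ω)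
    (hIndep : IndepFun (fun ω => (fun k => U k ω, eps ω)) Xstar μ) :
    charF μ (fun ω => Fin.snoc (fun k => X k ω) (Y ω))
      = fun s => charF μ Xstar (s ᵥ* obsMatrix β)
          * charF μ (fun ω => Fin.snoc (fun k => U k ω) (eps ω)) s := by
  have hobs : ∀ ω, Fin.snoc (fun k => X k ω) (Y ω)
      = obsMatrix β *ᵥ Xstar ω + Fin.snoc (fun k => U k ω) (eps ω) := by
    intro ω
    ext i
    induction i using Fin.lastCases <;> simp [obsMatrix_mulVec, hX, hY, add_comm]
  have hA : Continuous fun x : Fin K → ℝ => obsMatrix β *ᵥ x :=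
    (mulVecLin (obsMatrix β)).continuous_of_finiteDimensional
  have hB : Continuous fun p : (Fin K → ℝ) × ℝ => (Fin.snoc p.1 p.2 : Fin (K + 1) → ℝ) := by
    fun_prop
  ext s
  simp only [hobs]
  rw [charF_add_of_indepFun (A := fun ω => obsMatrix β *ᵥ Xstar ω)
    (B := fun ω => Fin.snoc (fun k => U k ω) (eps ω)) (hA.measurable.comp hXm)
    (hB.measurable.comp ((measurable_pi_lambda _ hUm).prodMk hem))
    (hIndep.symm.comp hA.measurable hB.measurable), charF_mulVec]

end Model

/-- for `k₁ ≠ k₂`, the second-order logarithmic derivative of the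
characteristic function of the observables `(X,Y)` equals that of `X*` evaluated at
`(s₁ + β₁ s_y, …, s_K + β_K s_y)`. -/
theorem stmt1 {Ω : Type*} [MeasurableSpace Ω] (μ : Measure Ω) [IsProbabilityMeasure μ]
    (K : ℕ) (Xstar : Ω → Fin K → ℝ) (U : Fin K → Ω → ℝ) (eps : Ω → ℝ) (β : Fin K → ℝ)
    (X : Fin K → Ω → ℝ) (Y : Ω → ℝ)
    (hXm : Measurable Xstar) (hUm : ∀ k, Measurable (U k)) (hem : Measurable eps)
    (hX : ∀ k ω, X k ω = Xstar ω k + U k ω)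
    (hY : ∀ ω, Y ω = ∑ k, β k * Xstar ω k + eps ω)
    (hIndep1 : iIndepFun ((Fin.snoc U eps : Fin (K+1) → Ω → ℝ)) μ)
    (hIndep2 : IndepFun (fun ω => (fun k => U k ω, eps ω)) Xstar μ)
    (hL2X : ∀ k, MemLp (fun ω => Xstar ω k) 2 μ)
    (hL2U : ∀ k, MemLp (U k) 2 μ) (hL2e : MemLp eps 2 μ)
    (s : Fin (K+1) → ℝ)
    (hne : charF μ (fun ω => Fin.snoc (fun k => X k ω) (Y ω)) s ≠ 0)
    (k1 k2 : Fin K) (hk : k1 ≠ k2) :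
    Lam (Fin.castSucc k1) (Fin.castSucc k2)
        (charF μ (fun ω => Fin.snoc (fun k => X k ω) (Y ω))) s
      = Lam k1 k2 (charF μ Xstar)
          (fun k => s (Fin.castSucc k) + β k * s (Fin.last K)) := by
  set V : Fin (K + 1) → Ω → ℝ := Fin.snoc U eps
  have hVm : ∀ j, Measurable (V j) := Fin.lastCases (by simpa [V]) (by simpa [V])
  have hVL2 : ∀ j, MemLp (V j) 2 μ := Fin.lastCases (by simpa [V]) (by simpa [V])
  have hV : (fun ω => Fin.snoc (fun k => U k ω) (eps ω)) = fun ω j => V j ω :=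
    funext fun ω => (Fin.comp_snoc (fun f : Ω → ℝ => f ω) U eps).symm
  have hC : ContDiff ℝ 2 fun x => charF μ Xstar (Matrix.vecMul x (obsMatrix β)) :=
    (contDiff_charF hXm hL2X).comp (obsMatrix β).vecMulLinear.toContinuousLinearMap.contDiff
  rw [charF_observation hXm hUm hem hX hY hIndep2, hV] at hne ⊢
  rw [Lam_mul _ _ hC (contDiff_charF (measurable_pi_lambda _ hVm) hVL2)
      (left_ne_zero_of_mul hne) (right_ne_zero_of_mul hne),
    Lam_comp_vecMul (contDiff_charF hXm hL2X) _ (single_castSucc_vecMul_obsMatrix β k1)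
      (single_castSucc_vecMul_obsMatrix β k2),
    Lam_charF_eq_zero_of_iIndepFun hIndep1 hVm hVL2 ((Fin.castSucc_injective K).ne hk)
      (right_ne_zero_of_mul hne), add_zero, vecMul_obsMatrix]
end

section
/- (Characteristic-function identity behind the ε-dependence non-identification.) Under the errors-in-variables model, let c_1,…,c_K ∈ ℝ with c_k ∉ {0,1}, β̃_k := c_kβ_k, X̃*_k := X*_k + U_k, and ε̃ := ε + Σ_{k=1}^K β_k((1−c_k)X*_k − c_kU_k). Then for every (s_1,…,s_K,s_y) ∈ ℝ^{K+1}: E[exp(i(Σ_{k=1}^K s_kX_k + s_yY))] = E[exp(i(Σ_{k=1}^K (s_k + β̃_k s_y)X̃*_k + s_y ε̃))]; i.e., the characteristic function of the observables computed from the original model coincides with that computed from the alternative model with coefficients β̃ and no measurement error. -/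
open MeasureTheory ProbabilityTheory

/-- characteristic-function identity behind the ε-dependence
non-identification: with `β̃_k := c_kβ_k`, `X̃*_k := X*_k + U_k` and
`ε̃ := ε + Σ_k β_k((1−c_k)X*_k − c_kU_k)`, for every `(s₁,…,s_K,s_y)`,
`E[exp(i(Σ_k s_kX_k + s_yY))] = E[exp(i(Σ_k (s_k + β̃_k s_y)X̃*_k + s_y ε̃))]`. -/
theorem stmt13 {Ω : Type*} [MeasurableSpace Ω] (μ : Measure Ω) [IsProbabilityMeasure μ]
    (K : ℕ) (Xstar : Ω → Fin K → ℝ) (U : Fin K → Ω → ℝ) (eps : Ω → ℝ) (β : Fin K → ℝ)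
    (X : Fin K → Ω → ℝ) (Y : Ω → ℝ)
    (hX : ∀ k ω, X k ω = Xstar ω k + U k ω)
    (hY : ∀ ω, Y ω = ∑ k, β k * Xstar ω k + eps ω)
    (c : Fin K → ℝ) (hc0 : ∀ k, c k ≠ 0) (hc1 : ∀ k, c k ≠ 1)
    (βt : Fin K → ℝ) (hβt : ∀ k, βt k = c k * β k)
    (Xt : Fin K → Ω → ℝ) (hXt : ∀ k ω, Xt k ω = Xstar ω k + U k ω)
    (epst : Ω → ℝ)
    (hepst : ∀ ω, epst ω
      = eps ω + ∑ k, β k * ((1 - c k) * Xstar ω k - c k * U k ω))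
    (s : Fin K → ℝ) (sy : ℝ) :
    ∫ ω, Complex.exp (Complex.I * ((∑ k, s k * X k ω + sy * Y ω : ℝ) : ℂ)) ∂μ
      = ∫ ω, Complex.exp (Complex.I *
          ((∑ k, (s k + βt k * sy) * Xt k ω + sy * epst ω : ℝ) : ℂ)) ∂μ := by
  have h : ∀ ω, (∑ k, s k * X k ω + sy * Y ω : ℝ)
      = ∑ k, (s k + βt k * sy) * Xt k ω + sy * epst ω := by
    intro ω
    simp only [hX, hY, hβt, hXt, hepst, mul_add, add_mul, sub_mul, mul_sub, one_mul,
      Finset.sum_add_distrib, Finset.sum_sub_distrib, Finset.mul_sum]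
    have e1 : ∑ x : Fin K, c x * β x * sy * Xstar ω x
        = ∑ x : Fin K, sy * β x * c x * Xstar ω x :=
      Finset.sum_congr rfl fun x _ => by ring
    have e2 : ∑ x : Fin K, c x * β x * sy * U x ω
        = ∑ x : Fin K, sy * β x * c x * U x ω :=
      Finset.sum_congr rfl fun x _ => by ring
    rw [e1, e2]; ring
  simp only [h]
end
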